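/- arXiv:math/0611243 — 2 statements merged into one kernel-verified Lean document; each statement's English description precedes it below -/
import Mathlib

section
/- Necessity of the dynamic programming equation for discrete Volterra control: if V(i,β) := min over controls u_{⟨i⟩} = (u(j) : i ≤ j ≤ N−1) of J_{i,β}(u_{⟨i⟩}), then V satisfies the recursion V(i,β) = min_{ξ∈U} { V(i+1, β⊗ξ) + Φ(i, x(i;i,β), ξ) } for 0 ≤ i ≤ N−1, with terminal condition V(N,β) = Φ₀(x(N;N,β)). -/
/-- Solution of the discrete controlled Volterra equation
`x k = x₀ k + ∑_{j<k} φ k j (x j) (u j)`. -/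
noncomputable def traj {E U : Type*} [AddCommGroup E]
    (x₀ : ℕ → E) (φ : ℕ → ℕ → E → U → E) (u : ℕ → U) : ℕ → E
  | k => x₀ k + ∑ j : Fin k, φ k j (traj x₀ φ u j) (u j)
  termination_by k => k
  decreasing_by exact j.isLt

/-- Parametrized cost `J_{i,β}(γ)`. -/
noncomputable def Jcost {E U : Type*} [AddCommGroup E] (N : ℕ)
    (x₀ : ℕ → E) (φ : ℕ → ℕ → E → U → E) (Φ : ℕ → E → U → ℝ) (Φ₀ : E → ℝ)
    (i : ℕ) (β γ : ℕ → U) : ℝ :=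
  (∑ j ∈ Finset.Ico i N,
      Φ j (traj x₀ φ (fun k => if k < i then β k else γ k) j) (γ j)) +
    Φ₀ (traj x₀ φ (fun k => if k < i then β k else γ k) N)

noncomputable def Vfun {E U : Type*} [AddCommGroup E] (N : ℕ)
    (x₀ : ℕ → E) (φ : ℕ → ℕ → E → U → E) (Φ : ℕ → E → U → ℝ) (Φ₀ : E → ℝ)
    (i : ℕ) (β : ℕ → U) : ℝ :=
  ⨅ γ : ℕ → U, Jcost N x₀ φ Φ Φ₀ i β γ

section aux
variable {E U : Type*} [AddCommGroup E]

lemma traj_congr (x₀ : ℕ → E) (φ : ℕ → ℕ → E → U → E) (u v : ℕ → U) :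
    ∀ k : ℕ, (∀ j < k, u j = v j) → traj x₀ φ u k = traj x₀ φ v k := by
  intro k
  induction k using Nat.strong_induction_on with
  | _ k ih =>
    intro h
    rw [traj, traj]
    congr 1
    apply Finset.sum_congr rfl
    intro j _
    rw [ih j j.isLt (fun m hm => h m (hm.trans j.isLt)), h j j.isLt]

lemma Jcost_congr (N : ℕ) (x₀ : ℕ → E) (φ : ℕ → ℕ → E → U → E)
    (Φ : ℕ → E → U → ℝ) (Φ₀ : E → ℝ) (i : ℕ) (β γ₁ γ₂ : ℕ → U)
    (h : ∀ j, i ≤ j → j < N → γ₁ j = γ₂ j) :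
    Jcost N x₀ φ Φ Φ₀ i β γ₁ = Jcost N x₀ φ Φ Φ₀ i β γ₂ := by
  have key : ∀ k ≤ N, traj x₀ φ (fun k => if k < i then β k else γ₁ k) k =
      traj x₀ φ (fun k => if k < i then β k else γ₂ k) k := by
    intro k hk
    apply traj_congr
    intro j hj
    by_cases hji : j < i
    · simp [hji]
    · simp only [hji, if_neg]
      exact h j (le_of_not_gt hji) (hj.trans_le hk)
  unfold Jcost
  rw [key N le_rfl]
  congr 1
  apply Finset.sum_congr rfl
  intro j hj
  rw [Finset.mem_Ico] at hj
  rw [key j hj.2.le, h j hj.1 hj.2]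

variable [Fintype U] [Nonempty U]

/-- attainment of the infimum -/
lemma Vfun_attained (N : ℕ) (x₀ : ℕ → E) (φ : ℕ → ℕ → E → U → E)
    (Φ : ℕ → E → U → ℝ) (Φ₀ : E → ℝ) (i : ℕ) (β : ℕ → U) :
    (∃ γ₀ : ℕ → U, Vfun N x₀ φ Φ Φ₀ i β = Jcost N x₀ φ Φ Φ₀ i β γ₀) ∧
    BddBelow (Set.range (Jcost N x₀ φ Φ Φ₀ i β)) := by
  classical
  set F : (Fin N → U) → ℝ := fun v =>
    Jcost N x₀ φ Φ Φ₀ i β (fun k => if h : k < N then v ⟨k, h⟩ else Classical.arbitrary U)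
  have hrange : Set.range (Jcost N x₀ φ Φ Φ₀ i β) = Set.range F := by
    apply Set.Subset.antisymm
    · rintro _ ⟨γ, rfl⟩
      refine ⟨fun j => γ j, ?_⟩
      apply Jcost_congr
      intro j _ hj
      simp [hj]
    · rintro _ ⟨v, rfl⟩
      exact ⟨_, rfl⟩
  have hfin : (Set.range (Jcost N x₀ φ Φ Φ₀ i β)).Finite := by
    rw [hrange]; exact Set.finite_range F
  have hne : (Set.range (Jcost N x₀ φ Φ Φ₀ i β)).Nonempty := Set.range_nonempty _
  refine ⟨?_, hfin.bddBelow⟩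
  have := hne.csInf_mem hfin
  obtain ⟨γ₀, hγ₀⟩ := this
  exact ⟨γ₀, hγ₀.symm⟩

lemma Jcost_step (N : ℕ) (x₀ : ℕ → E) (φ : ℕ → ℕ → E → U → E)
    (Φ : ℕ → E → U → ℝ) (Φ₀ : E → ℝ) (i : ℕ) (hi : i < N) (β γ : ℕ → U) :
    Jcost N x₀ φ Φ Φ₀ i β γ =
      Φ i (traj x₀ φ β i) (γ i) +
        Jcost N x₀ φ Φ Φ₀ (i + 1) (Function.update β i (γ i)) γ := by
  classical
  have hm : (fun k => if k < i then β k else γ k) =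
      (fun k => if k < i + 1 then (Function.update β i (γ i)) k else γ k) := by
    funext k
    rcases lt_trichotomy k i with h | h | h
    · simp [h, h.trans (Nat.lt_succ_self i), Function.update_of_ne h.ne]
    · subst h
      simp [Nat.lt_succ_self]
    · have h1 : ¬ k < i := not_lt.mpr h.le
      have h2 : ¬ k < i + 1 := not_lt.mpr h
      simp [h1, h2]
  have hx : traj x₀ φ (fun k => if k < i then β k else γ k) i = traj x₀ φ β i := by
    apply traj_congr
    intro j hj
    simp [hj]
  unfold Jcost
  rw [← hm, Finset.sum_eq_sum_sdiff_singleton_add (Finset.mem_Ico.mpr ⟨le_rfl, hi⟩), hx]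
  have : Finset.Ico i N \ {i} = Finset.Ico (i + 1) N := by
    ext j
    simp only [Finset.mem_sdiff, Finset.mem_Ico, Finset.mem_singleton]
    omega
  rw [this]
  ring

end aux

/-- Necessity of the dynamic programming equation for discrete Volterra
control (Theorem 2.1): the value function satisfies the recursion
`V i β = min_ξ { V (i+1) (β⊗ξ) + Φ(i, x(i;i,β), ξ) }` for `i < N` and the
terminal condition `V N β = Φ₀(x(N;N,β))`. -/
theorem stmt6 {E U : Type*} [AddCommGroup E] [Fintype U] [Nonempty U] (N : ℕ)
    (x₀ : ℕ → E) (φ : ℕ → ℕ → E → U → E) (Φ : ℕ → E → U → ℝ) (Φ₀ : E → ℝ) :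
    (∀ β : ℕ → U, Vfun N x₀ φ Φ Φ₀ N β = Φ₀ (traj x₀ φ β N)) ∧
    (∀ i < N, ∀ β : ℕ → U,
      Vfun N x₀ φ Φ Φ₀ i β =
        ⨅ ξ : U, (Vfun N x₀ φ Φ Φ₀ (i + 1) (Function.update β i ξ) +
          Φ i (traj x₀ φ β i) ξ)) := by
  classical
  constructor
  · intro β
    have hJ : ∀ γ : ℕ → U, Jcost N x₀ φ Φ Φ₀ N β γ = Φ₀ (traj x₀ φ β N) := by
      intro γ
      unfold Jcost
      rw [Finset.Ico_self, Finset.sum_empty, zero_add]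
      congr 1
      apply traj_congr
      intro j hj
      simp [hj]
    unfold Vfun
    rw [show (fun γ : ℕ → U => Jcost N x₀ φ Φ Φ₀ N β γ) = fun _ => Φ₀ (traj x₀ φ β N) from funext hJ]
    exact ciInf_const
  · intro i hi β
    set x := traj x₀ φ β i with hx
    have hbdd : ∀ (i' : ℕ) (β' : ℕ → U),
        BddBelow (Set.range (Jcost N x₀ φ Φ Φ₀ i' β')) :=
      fun i' β' => (Vfun_attained N x₀ φ Φ Φ₀ i' β').2
    apply le_antisymm
    · -- V i β ≤ ⨅ ξ
      apply le_ciInf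
      intro ξ
      obtain ⟨γ₀, hγ₀⟩ := (Vfun_attained N x₀ φ Φ Φ₀ (i + 1) (Function.update β i ξ)).1
      set γ₁ : ℕ → U := Function.update γ₀ i ξ with hγ₁
      have h1 : Jcost N x₀ φ Φ Φ₀ (i + 1) (Function.update β i ξ) γ₁ =
          Jcost N x₀ φ Φ Φ₀ (i + 1) (Function.update β i ξ) γ₀ := by
        apply Jcost_congr
        intro j hj _
        exact Function.update_of_ne (by omega) _ _
      have h2 : Jcost N x₀ φ Φ Φ₀ i β γ₁ =
          Φ i x ξ + Jcost N x₀ φ Φ Φ₀ (i + 1) (Function.update β i ξ) γ₀ := by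
        rw [Jcost_step N x₀ φ Φ Φ₀ i hi β γ₁]
        simp only [hγ₁, Function.update_self]
        rw [h1]
      calc Vfun N x₀ φ Φ Φ₀ i β ≤ Jcost N x₀ φ Φ Φ₀ i β γ₁ :=
            ciInf_le (hbdd i β) γ₁
        _ = Vfun N x₀ φ Φ Φ₀ (i + 1) (Function.update β i ξ) + Φ i x ξ := by
            rw [h2, hγ₀]; ring
    · -- ⨅ ξ ≤ V i β
      apply le_ciInf
      intro γ
      have key : Jcost N x₀ φ Φ Φ₀ i β γ =
          Φ i x (γ i) + Jcost N x₀ φ Φ Φ₀ (i + 1) (Function.update β i (γ i)) γ :=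
        Jcost_step N x₀ φ Φ Φ₀ i hi β γ
      have hbddU : BddBelow (Set.range (fun ξ : U =>
          Vfun N x₀ φ Φ Φ₀ (i + 1) (Function.update β i ξ) + Φ i x ξ)) :=
        (Set.finite_range _).bddBelow
      calc (⨅ ξ : U, (Vfun N x₀ φ Φ Φ₀ (i + 1) (Function.update β i ξ) + Φ i x ξ))
          ≤ Vfun N x₀ φ Φ Φ₀ (i + 1) (Function.update β i (γ i)) + Φ i x (γ i) :=
            ciInf_le hbddU (γ i)
        _ ≤ Jcost N x₀ φ Φ Φ₀ (i + 1) (Function.update β i (γ i)) γ + Φ i x (γ i) := by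
            gcongr
            exact ciInf_le (hbdd _ _) γ
        _ = Jcost N x₀ φ Φ Φ₀ i β γ := by rw [key]; ring
end

section
/- Euler discretization error for controlled Volterra equations: under assumptions (i)–(iii), for every Lipschitz control u ∈ U_{ad,Lip}(L), the Euler approximation xʰ defined by xʰ(i) = x₀(ih) + h∑_{j=0}^{i−1} f(ih, jh, xʰ(j), u(jh)) satisfies |x(ih) − xʰ(i)| ≤ M̄·h·exp(L_f·T) for all i = 1,…,N, where M̄ := T[M₁λₙ + L_f λₙ M_x + L_f L λₘ], M_x is the uniform bound on |x'(t)|, and λₙ, λₘ are the dimension-dependent Lipschitz coefficients. -/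
open Set Finset MeasureTheory intervalIntegral Filter Topology

set_option maxHeartbeats 2000000

/-- Euler discretization error for controlled Volterra equations
(Theorem 3.1): for an `L`-Lipschitz admissible control `u`, the Euler
approximation `xʰ i = x₀(ih) + h ∑_{j<i} f(ih, jh, xʰ j, u(jh))` of the
solution of `x t = x₀ t + ∫₀ᵗ f(t,s,x s,u s) ds` satisfies
`‖x(ih) − xʰ i‖ ≤ M̄ h exp(L_f T)` for `1 ≤ i ≤ N`, where
`M̄ = T (M₁ λₙ + L_f λₙ M_x + L_f L λₘ)`, `M₁` bounds `∂f/∂s`, `M_x` bounds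
`‖x'‖`, and `λₙ, λₘ ≥ 1` are the dimension-dependent Lipschitz coefficients. -/
theorem stmt13 {n m : ℕ} (N : ℕ) (hN : 0 < N) (T h : ℝ) (hT : 0 < T)
    (hh : h = T / N) (L Lf M₁ Mx lamn lamm : ℝ)
    (hL : 0 ≤ L) (hLf : 0 ≤ Lf) (hM₁ : 0 ≤ M₁) (hMx : 0 ≤ Mx)
    (hlamn : 1 ≤ lamn) (hlamm : 1 ≤ lamm)
    (U : Set (EuclideanSpace ℝ (Fin m)))
    (u : ℝ → EuclideanSpace ℝ (Fin m)) (huU : ∀ t, u t ∈ U)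
    (huLip : ∀ t₁ t₂, ‖u t₁ - u t₂‖ ≤ L * |t₁ - t₂|)
    (x₀ : ℝ → EuclideanSpace ℝ (Fin n))
    (f fs : ℝ → ℝ → EuclideanSpace ℝ (Fin n) → EuclideanSpace ℝ (Fin m) →
      EuclideanSpace ℝ (Fin n))
    (hfsder : ∀ t s y v, HasDerivAt (fun σ => f t σ y v) (fs t s y v) s)
    (hfsbnd : ∀ t s, 0 ≤ s → s ≤ t → t ≤ T → ∀ y, ∀ v ∈ U, ‖fs t s y v‖ ≤ M₁)
    (hfLip : ∀ t s, 0 ≤ s → s ≤ t → t ≤ T → ∀ y₁ y₂, ∀ v₁ ∈ U, ∀ v₂ ∈ U,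
      ‖f t s y₁ v₁ - f t s y₂ v₂‖ ≤ Lf * (‖y₁ - y₂‖ + ‖v₁ - v₂‖))
    (x x' : ℝ → EuclideanSpace ℝ (Fin n))
    (hx : ∀ t ∈ Set.Icc (0:ℝ) T,
      x t = x₀ t + ∫ s in (0:ℝ)..t, f t s (x s) (u s))
    (hxder : ∀ t ∈ Set.Icc (0:ℝ) T, HasDerivWithinAt x (x' t) (Set.Icc 0 T) t)
    (hxbnd : ∀ t ∈ Set.Icc (0:ℝ) T, ‖x' t‖ ≤ Mx)
    (xh : ℕ → EuclideanSpace ℝ (Fin n))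
    (hxh : ∀ i ≤ N, xh i = x₀ (i * h) +
      h • ∑ j ∈ Finset.range i, f (i * h) (j * h) (xh j) (u (j * h))) :
    ∀ i, 1 ≤ i → i ≤ N →
      ‖x (i * h) - xh i‖ ≤
        (T * (M₁ * lamn + Lf * lamn * Mx + Lf * L * lamm)) * h *
          Real.exp (Lf * T) := by
  have hNpos : (0:ℝ) < (N:ℝ) := by exact_mod_cast hN
  have hhpos : 0 < h := by rw [hh]; positivity
  have hkh : ∀ k : ℕ, k ≤ N → (k:ℝ) * h ≤ T := by
    intro k hk
    have hk' : (k:ℝ) ≤ (N:ℝ) := by exact_mod_cast hk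
    calc (k:ℝ) * h ≤ (N:ℝ) * h := by gcongr
      _ = T := by rw [hh]; field_simp
  -- continuity of x and u
  have hxcont : ContinuousOn x (Set.Icc 0 T) := fun t ht =>
    (hxder t ht).continuousWithinAt
  have hucont : Continuous u := by
    have : LipschitzWith (Real.toNNReal L) u := by
      apply LipschitzWith.of_dist_le_mul
      intro a b
      rw [dist_eq_norm, Real.dist_eq, Real.coe_toNNReal L hL]
      exact huLip a b
    exact this.continuous
  -- continuity of the integrand
  have hgcont : ∀ t, 0 ≤ t → t ≤ T →
      ContinuousOn (fun s => f t s (x s) (u s)) (Set.Icc 0 t) := by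
    intro t ht0 htT s₀ hs₀
    have hs₀T : s₀ ∈ Set.Icc (0:ℝ) T := ⟨hs₀.1, hs₀.2.trans htT⟩
    rw [ContinuousWithinAt, tendsto_iff_norm_sub_tendsto_zero]
    have hA : Tendsto (fun s => ‖x s - x s₀‖) (𝓝[Set.Icc 0 t] s₀) (𝓝 0) := by
      have h1 : ContinuousWithinAt x (Set.Icc 0 t) s₀ :=
        (hxcont s₀ hs₀T).mono (Set.Icc_subset_Icc le_rfl htT)
      have h2 := (h1.sub (continuousWithinAt_const (b := x s₀))).norm
      simpa [ContinuousWithinAt, sub_self] using h2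
    have hB : Tendsto (fun s => ‖u s - u s₀‖) (𝓝[Set.Icc 0 t] s₀) (𝓝 0) := by
      have h1 : ContinuousWithinAt u (Set.Icc 0 t) s₀ :=
        hucont.continuousWithinAt
      have h2 := (h1.sub (continuousWithinAt_const (b := u s₀))).norm
      simpa [ContinuousWithinAt, sub_self] using h2
    have hC : Tendsto (fun s => ‖f t s (x s₀) (u s₀) - f t s₀ (x s₀) (u s₀)‖)
        (𝓝[Set.Icc 0 t] s₀) (𝓝 0) := by
      have h1 : ContinuousWithinAt (fun s => f t s (x s₀) (u s₀)) (Set.Icc 0 t) s₀ :=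
        (hfsder t s₀ (x s₀) (u s₀)).continuousAt.continuousWithinAt
      have h2 := (h1.sub (continuousWithinAt_const (b := f t s₀ (x s₀) (u s₀)))).norm
      simpa [ContinuousWithinAt, sub_self] using h2
    apply squeeze_zero' (g := fun s =>
        Lf * (‖x s - x s₀‖ + ‖u s - u s₀‖) +
          ‖f t s (x s₀) (u s₀) - f t s₀ (x s₀) (u s₀)‖)
    · exact Eventually.of_forall fun s => norm_nonneg _
    · filter_upwards [eventually_mem_nhdsWithin] with s hs
      calc ‖f t s (x s) (u s) - f t s₀ (x s₀) (u s₀)‖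
          ≤ ‖f t s (x s) (u s) - f t s (x s₀) (u s₀)‖ +
            ‖f t s (x s₀) (u s₀) - f t s₀ (x s₀) (u s₀)‖ := by
              have := norm_add_le (f t s (x s) (u s) - f t s (x s₀) (u s₀))
                (f t s (x s₀) (u s₀) - f t s₀ (x s₀) (u s₀))
              simpa [sub_add_sub_cancel] using this
        _ ≤ Lf * (‖x s - x s₀‖ + ‖u s - u s₀‖) +
            ‖f t s (x s₀) (u s₀) - f t s₀ (x s₀) (u s₀)‖ := by
              gcongr
              exact hfLip t s hs.1 hs.2 htT _ _ _ (huU s) _ (huU s₀)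
    · have := (tendsto_const_nhds (x := Lf) (f := 𝓝[Set.Icc 0 t] s₀)).mul
        (hA.add hB) |>.add hC
      simpa using this
  -- integrability on subintervals
  have hint : ∀ i : ℕ, i ≤ N → ∀ j, j < i →
      IntervalIntegrable (fun s => f ((i:ℝ)*h) s (x s) (u s)) volume
        ((j:ℝ)*h) (((j:ℕ)+1:ℕ)*h : ℝ) := by
    intro i hiN j hj
    have hib : ((i:ℝ)*h) ≤ T := hkh i hiN
    have hi0 : (0:ℝ) ≤ (i:ℝ)*h := by positivity
    apply (hgcont ((i:ℝ)*h) hi0 hib).mono ?_ |>.intervalIntegrable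
    rw [Set.uIcc_of_le (by push_cast; nlinarith)]
    apply Set.Icc_subset_Icc
    · positivity
    · push_cast
      have : (j:ℝ)+1 ≤ (i:ℝ) := by exact_mod_cast hj
      nlinarith
  -- the key recurrence
  set K : ℝ := M₁ + Lf*Mx + Lf*L with hK
  have hKnn : 0 ≤ K := by
    have := mul_nonneg hLf hMx
    have := mul_nonneg hLf hL
    rw [hK]; linarith
  have hrec : ∀ i : ℕ, i ≤ N →
      ‖x ((i:ℝ)*h) - xh i‖ ≤ T*K*h +
        (h*Lf) * ∑ j ∈ Finset.range i, ‖x ((j:ℝ)*h) - xh j‖ := by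
    intro i hiN
    have hi0 : (0:ℝ) ≤ (i:ℝ)*h := by positivity
    have hiT : (i:ℝ)*h ≤ T := hkh i hiN
    have hxe := hx ((i:ℝ)*h) ⟨hi0, hiT⟩
    have hxhe := hxh i hiN
    have hsplit := intervalIntegral.sum_integral_adjacent_intervals
      (a := fun k : ℕ => (k:ℝ)*h) (μ := volume)
      (f := fun s => f ((i:ℝ)*h) s (x s) (u s)) (n := i) (hint i hiN)
    simp only [Nat.cast_zero, zero_mul] at hsplit
    have hdiff : x ((i:ℝ)*h) - xh i = ∑ j ∈ Finset.range i,
        ((∫ s in ((j:ℝ)*h)..(((j:ℕ)+1:ℕ)*h : ℝ), f ((i:ℝ)*h) s (x s) (u s)) -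
          h • f ((i:ℝ)*h) ((j:ℝ)*h) (xh j) (u ((j:ℝ)*h))) := by
      rw [Finset.sum_sub_distrib, hsplit, hxe, hxhe, Finset.smul_sum]
      abel
    have hterm : ∀ j ∈ Finset.range i,
        ‖(∫ s in ((j:ℝ)*h)..(((j:ℕ)+1:ℕ)*h : ℝ), f ((i:ℝ)*h) s (x s) (u s)) -
          h • f ((i:ℝ)*h) ((j:ℝ)*h) (xh j) (u ((j:ℝ)*h))‖ ≤
          (K*h + Lf * ‖x ((j:ℝ)*h) - xh j‖) * h := by
      intro j hj
      rw [Finset.mem_range] at hj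
      set a : ℝ := (j:ℝ)*h with ha
      set b : ℝ := (((j:ℕ)+1:ℕ)*h : ℝ) with hb
      have hba : b - a = h := by rw [ha, hb]; push_cast; ring
      have hab : a ≤ b := by nlinarith
      have ha0 : 0 ≤ a := by positivity
      have hbi : b ≤ (i:ℝ)*h := by
        rw [hb]
        have : ((j:ℕ)+1:ℕ) ≤ i := hj
        have : (((j:ℕ)+1:ℕ):ℝ) ≤ (i:ℝ) := by exact_mod_cast this
        nlinarith
      have hcnst : h • f ((i:ℝ)*h) a (xh j) (u a) =
          ∫ _ in a..b, f ((i:ℝ)*h) a (xh j) (u a) := by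
        rw [intervalIntegral.integral_const, hba]
      rw [hcnst, ← intervalIntegral.integral_sub (hint i hiN j hj)
        intervalIntegrable_const]
      have hbnd : ∀ s ∈ Set.uIoc a b,
          ‖f ((i:ℝ)*h) s (x s) (u s) - f ((i:ℝ)*h) a (xh j) (u a)‖ ≤
            K*h + Lf * ‖x a - xh j‖ := by
        intro s hs
        rw [Set.uIoc_of_le hab] at hs
        have hsa : a < s := hs.1
        have hsb : s ≤ b := hs.2
        have hsi : s ≤ (i:ℝ)*h := hsb.trans hbi
        have hsT : s ≤ T := hsi.trans hiT
        have hs0 : 0 ≤ s := ha0.trans hsa.le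
        have hsah : s - a ≤ h := by linarith
        -- term A: variation in the second argument
        have htA : ‖f ((i:ℝ)*h) s (x s) (u s) - f ((i:ℝ)*h) a (x s) (u s)‖ ≤ M₁ * h := by
          have hmv := Convex.norm_image_sub_le_of_norm_hasDerivWithin_le
            (f := fun σ => f ((i:ℝ)*h) σ (x s) (u s))
            (f' := fun σ => fs ((i:ℝ)*h) σ (x s) (u s))
            (s := Set.Icc a s) (C := M₁)
            (fun σ _ => (hfsder ((i:ℝ)*h) σ (x s) (u s)).hasDerivWithinAt)
            (fun σ hσ => hfsbnd ((i:ℝ)*h) σ (ha0.trans hσ.1) (hσ.2.trans hsi) hiT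
              (x s) (u s) (huU s))
            (convex_Icc a s) ⟨le_rfl, hsa.le⟩ ⟨hsa.le, le_rfl⟩
          calc ‖f ((i:ℝ)*h) s (x s) (u s) - f ((i:ℝ)*h) a (x s) (u s)‖
              ≤ M₁ * ‖s - a‖ := hmv
            _ ≤ M₁ * h := by
                gcongr
                rw [Real.norm_eq_abs, abs_of_nonneg (by linarith)]
                exact hsah
        -- x is Mx-Lipschitz
        have hxl : ‖x s - x a‖ ≤ Mx * h := by
          have hmv := Convex.norm_image_sub_le_of_norm_hasDerivWithin_le
            (f := x) (f' := x') (s := Set.Icc 0 T) (C := Mx)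
            hxder hxbnd (convex_Icc 0 T) ⟨ha0, (hab.trans hbi).trans hiT⟩ ⟨hs0, hsT⟩
          calc ‖x s - x a‖ ≤ Mx * ‖s - a‖ := hmv
            _ ≤ Mx * h := by
                gcongr
                rw [Real.norm_eq_abs, abs_of_nonneg (by linarith)]
                exact hsah
        have hul : ‖u s - u a‖ ≤ L * h := by
          calc ‖u s - u a‖ ≤ L * |s - a| := huLip s a
            _ ≤ L * h := by
                gcongr
                rw [abs_of_nonneg (by linarith)]
                exact hsah
        have htB : ‖f ((i:ℝ)*h) a (x s) (u s) - f ((i:ℝ)*h) a (xh j) (u a)‖ ≤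
            Lf * ((Mx*h + ‖x a - xh j‖) + L*h) := by
          calc ‖f ((i:ℝ)*h) a (x s) (u s) - f ((i:ℝ)*h) a (xh j) (u a)‖
              ≤ Lf * (‖x s - xh j‖ + ‖u s - u a‖) :=
                hfLip ((i:ℝ)*h) a ha0 (hsa.le.trans hsi) hiT _ _ _ (huU s) _ (huU a)
            _ ≤ Lf * ((Mx*h + ‖x a - xh j‖) + L*h) := by
                gcongr
                calc ‖x s - xh j‖ ≤ ‖x s - x a‖ + ‖x a - xh j‖ := by
                      have := norm_add_le (x s - x a) (x a - xh j)
                      simpa [sub_add_sub_cancel] using this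
                  _ ≤ Mx*h + ‖x a - xh j‖ := by gcongr
        calc ‖f ((i:ℝ)*h) s (x s) (u s) - f ((i:ℝ)*h) a (xh j) (u a)‖
            ≤ ‖f ((i:ℝ)*h) s (x s) (u s) - f ((i:ℝ)*h) a (x s) (u s)‖ +
              ‖f ((i:ℝ)*h) a (x s) (u s) - f ((i:ℝ)*h) a (xh j) (u a)‖ := by
                have := norm_add_le
                  (f ((i:ℝ)*h) s (x s) (u s) - f ((i:ℝ)*h) a (x s) (u s))
                  (f ((i:ℝ)*h) a (x s) (u s) - f ((i:ℝ)*h) a (xh j) (u a))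
                simpa [sub_add_sub_cancel] using this
          _ ≤ M₁ * h + Lf * ((Mx*h + ‖x a - xh j‖) + L*h) := by gcongr
          _ = K*h + Lf * ‖x a - xh j‖ := by rw [hK]; ring
      calc ‖∫ s in a..b, (f ((i:ℝ)*h) s (x s) (u s) - f ((i:ℝ)*h) a (xh j) (u a))‖
          ≤ (K*h + Lf * ‖x a - xh j‖) * |b - a| :=
            intervalIntegral.norm_integral_le_of_norm_le_const hbnd
        _ = (K*h + Lf * ‖x a - xh j‖) * h := by
            rw [hba, abs_of_nonneg hhpos.le]
    calc ‖x ((i:ℝ)*h) - xh i‖ = ‖∑ j ∈ Finset.range i,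
          ((∫ s in ((j:ℝ)*h)..(((j:ℕ)+1:ℕ)*h : ℝ), f ((i:ℝ)*h) s (x s) (u s)) -
            h • f ((i:ℝ)*h) ((j:ℝ)*h) (xh j) (u ((j:ℝ)*h)))‖ := by rw [hdiff]
      _ ≤ ∑ j ∈ Finset.range i, ‖(∫ s in ((j:ℝ)*h)..(((j:ℕ)+1:ℕ)*h : ℝ),
            f ((i:ℝ)*h) s (x s) (u s)) -
            h • f ((i:ℝ)*h) ((j:ℝ)*h) (xh j) (u ((j:ℝ)*h))‖ := norm_sum_le _ _
      _ ≤ ∑ j ∈ Finset.range i, (K*h + Lf * ‖x ((j:ℝ)*h) - xh j‖) * h :=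
            Finset.sum_le_sum hterm
      _ = (i:ℝ)*(K*(h*h)) + (h*Lf) * ∑ j ∈ Finset.range i, ‖x ((j:ℝ)*h) - xh j‖ := by
            rw [Finset.sum_congr rfl (fun j _ => by ring :
              ∀ j ∈ Finset.range i, (K*h + Lf * ‖x ((j:ℝ)*h) - xh j‖) * h =
                K*(h*h) + h*Lf*‖x ((j:ℝ)*h) - xh j‖)]
            rw [Finset.sum_add_distrib, Finset.sum_const, Finset.card_range,
              nsmul_eq_mul, ← Finset.mul_sum]
      _ ≤ T*K*h + (h*Lf) * ∑ j ∈ Finset.range i, ‖x ((j:ℝ)*h) - xh j‖ := by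
            have : (i:ℝ)*(K*(h*h)) = (K*h)*((i:ℝ)*h) := by ring
            rw [this]
            have h2 : (K*h)*((i:ℝ)*h) ≤ (K*h)*T := by
              apply mul_le_mul_of_nonneg_left hiT (by positivity)
            nlinarith
  -- discrete Gronwall
  have hgron : ∀ i : ℕ, i ≤ N → ‖x ((i:ℝ)*h) - xh i‖ ≤ (T*K*h) * (1 + h*Lf)^i := by
    intro i
    induction i using Nat.strong_induction_on with
    | _ i ih =>
      intro hiN
      have hgeom : (∑ j ∈ Finset.range i, (1 + h*Lf)^j) * (h*Lf) = (1 + h*Lf)^i - 1 := by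
        have := geom_sum_mul (1 + h*Lf) i
        linear_combination this
      calc ‖x ((i:ℝ)*h) - xh i‖
          ≤ T*K*h + (h*Lf) * ∑ j ∈ Finset.range i, ‖x ((j:ℝ)*h) - xh j‖ := hrec i hiN
        _ ≤ T*K*h + (h*Lf) * ∑ j ∈ Finset.range i, (T*K*h) * (1 + h*Lf)^j := by
            have hs : ∑ j ∈ Finset.range i, ‖x ((j:ℝ)*h) - xh j‖ ≤
                ∑ j ∈ Finset.range i, (T*K*h) * (1 + h*Lf)^j :=
              Finset.sum_le_sum fun j hj => ih j (Finset.mem_range.mp hj)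
                ((Finset.mem_range.mp hj).le.trans hiN)
            have hm := mul_le_mul_of_nonneg_left hs (by positivity : (0:ℝ) ≤ h*Lf)
            linarith
        _ = (T*K*h) * (1 + h*Lf)^i := by
            rw [← Finset.mul_sum]
            linear_combination (T*K*h) * hgeom
  -- conclusion
  intro i hi1 hiN
  have hexp : (1 + h*Lf)^i ≤ Real.exp (Lf * T) := by
    have h1 : (1 + h*Lf)^i ≤ (Real.exp (h*Lf))^i := by
      apply pow_le_pow_left₀ (by positivity)
      linarith [Real.add_one_le_exp (h*Lf)]
    have h2 : (Real.exp (h*Lf))^i = Real.exp ((i:ℝ)*(h*Lf)) := by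
      rw [Real.exp_nat_mul]
    have h3 : (i:ℝ)*(h*Lf) ≤ Lf * T := by
      have := hkh i hiN
      nlinarith
    calc (1 + h*Lf)^i ≤ (Real.exp (h*Lf))^i := h1
      _ = Real.exp ((i:ℝ)*(h*Lf)) := h2
      _ ≤ Real.exp (Lf * T) := Real.exp_le_exp.mpr h3
  have hKle : K ≤ M₁ * lamn + Lf * lamn * Mx + Lf * L * lamm := by
    rw [hK]
    have h1 : M₁ ≤ M₁ * lamn := by nlinarith
    have h2 : Lf*Mx ≤ Lf * lamn * Mx := by nlinarith [mul_nonneg hLf hMx]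
    have h3 : Lf*L ≤ Lf * L * lamm := by nlinarith [mul_nonneg hLf hL]
    linarith
  calc ‖x ((i:ℝ)*h) - xh i‖ ≤ (T*K*h) * (1 + h*Lf)^i := hgron i hiN
    _ ≤ (T*K*h) * Real.exp (Lf * T) := by
        apply mul_le_mul_of_nonneg_left hexp (by positivity)
    _ ≤ (T * (M₁ * lamn + Lf * lamn * Mx + Lf * L * lamm)) * h * Real.exp (Lf * T) := by
        have : T*K*h ≤ T * (M₁ * lamn + Lf * lamn * Mx + Lf * L * lamm) * h := by
          apply mul_le_mul_of_nonneg_right ?_ hhpos.le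
          exact mul_le_mul_of_nonneg_left hKle hT.le
        apply mul_le_mul_of_nonneg_right this (Real.exp_nonneg _)
end
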